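/- arXiv:1902.03648 — 3 statements merged into one kernel-verified Lean document; each statement's English description precedes it below -/
import Mathlib

section
/- Let n_1 ≤ … ≤ n_k be positive integers, m a positive integer, and ℓ = m(n_1+…+n_k). Then the almost multipartite graph G^m_{ℓ,k} contains an induced subgraph isomorphic to mK_{n_1,…,n_k}, the disjoint union of m copies of the complete multipartite graph K_{n_1,…,n_k}. -/
/-- Disjoint union of `m` copies of a graph `A`. -/
def manyCopies {α : Type*} (m : ℕ) (A : SimpleGraph α) : SimpleGraph (Fin m × α) where
  Adj p q := p.1 = q.1 ∧ A.Adj p.2 q.2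
  symm := by constructor; intro p q h; exact ⟨h.1.symm, h.2.symm⟩
  loopless := by constructor; intro p h; exact A.loopless.irrefl _ h.2

/-- The almost multipartite graph `G^m_{ℓ,k}`, on triples `(i, j, h)` where `i` is the
class, `j` the dole and `h` the part: two vertices are adjacent iff they are in the same
part with different classes and doles, or have the same class and different parts. -/
def almostMultipartite (ℓ k m : ℕ) : SimpleGraph (Fin ℓ × Fin k × Fin m) where
  Adj p q := (p.2.2 = q.2.2 ∧ p.1 ≠ q.1 ∧ p.2.1 ≠ q.2.1) ∨ (p.1 = q.1 ∧ p.2.2 ≠ q.2.2)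
  symm := by
    constructor
    rintro p q (⟨h1, h2, h3⟩ | ⟨h1, h2⟩)
    · exact Or.inl ⟨h1.symm, h2.symm, h3.symm⟩
    · exact Or.inr ⟨h1.symm, h2.symm⟩
  loopless := by constructor; rintro p (⟨_, h, _⟩ | ⟨_, h⟩) <;> exact h rfl

/-- Copy `c` goes to part `c` and dole `i` of the multipartite graph to dole `i`; every vertex
gets its own class, so the "same class" adjacencies of `G^m_{ℓ,k}` never occur in the image. -/
def manyCopiesCompleteMultipartiteEmbedding {ℓ k m : ℕ} {V : Fin k → Type*}
    (f : Fin m × (Σ i, V i) ↪ Fin ℓ) :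
    manyCopies m (SimpleGraph.completeMultipartiteGraph V) ↪g almostMultipartite ℓ k m where
  toFun v := (f v, v.2.1, v.1)
  inj' _ _ h := f.injective (congrArg Prod.fst h)
  map_rel_iff' {v w} := by
    constructor
    · rintro (⟨hpart, -, hdole⟩ | ⟨hclass, hpart⟩)
      · exact ⟨hpart, hdole⟩
      · exact absurd (congrArg Prod.fst (f.injective hclass)) hpart
    · rintro ⟨hpart, hdole⟩
      refine Or.inl ⟨hpart, fun hclass => ?_, hdole⟩
      exact hdole (congrArg (·.2.1) (f.injective hclass))

theorem almostMultipartite_contains_general (k m : ℕ) (n : Fin k → ℕ) :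
    Nonempty ((manyCopies m (SimpleGraph.completeMultipartiteGraph fun i => Fin (n i))) ↪g
        almostMultipartite (m * ∑ i, n i) k m) := by
  have hcard : Fintype.card (Fin m × Σ i, Fin (n i)) = m * ∑ i, n i := by simp
  exact ⟨manyCopiesCompleteMultipartiteEmbedding (Fintype.equivFinOfCardEq hcard).toEmbedding⟩

/-- `G^m_{ℓ,k}` contains an induced subgraph isomorphic to
`mK_{n₁,…,n_k}`, where `ℓ = m(n₁+…+n_k)`. -/
theorem almostMultipartite_contains (k m : ℕ) (hk : 0 < k) (hm : 0 < m)
    (n : Fin k → ℕ) (hpos : ∀ i, 0 < n i) (hmono : Monotone n) :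
    Nonempty ((manyCopies m (SimpleGraph.completeMultipartiteGraph fun i => Fin (n i))) ↪g
        almostMultipartite (m * ∑ i, n i) k m) :=
  almostMultipartite_contains_general k m n
end

section
/- Let n_1 ≤ … ≤ n_k be positive integers with k ≥ 2 and n_k > 1, let m ≥ 1, and let ℓ = m(n_1+…+n_k). Then the almost multipartite graph G^m_{ℓ−1,k} does not contain an induced subgraph isomorphic to mK_{n_1,…,n_k}. -/
/-!
Let `f` embed `m` copies of `K_{n₁,…,n_k}` as an induced subgraph of `G^m_{ℓ,k}`, and write
`f u = (class, dole, part)`. Inside one part the graph is `K_ℓ × K_k` (adjacent iff both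
coordinates differ); across parts two vertices are adjacent iff they share the class.

The key point is that every copy has a *private* part, met by no other copy. For three vertices
`u₁ ≠ u₂` of a dole with two vertices and `s` of another dole of the same copy, the relative
position of their parts leaves three cases; in each one, a vertex of another copy lying in the
chosen part has its class and dole forced, and then one of its neighbours in its own copy
cannot be placed anywhere. With `m` copies and `m` parts, the private parts are all the parts, so
each copy fills exactly one part. Inside a part, the `k` doles of a copy must then go to the `k`
target doles bijectively, which makes the class map injective, and there are only `ℓ` classes
for the `m(n₁+…+n_k)` vertices.
-/

open SimpleGraph

namespace almostMultipartite

variable {k L m : ℕ} {V : Fin k → Type*}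
  (f : manyCopies m (completeMultipartiteGraph V) ↪g almostMultipartite L k m)

section Adjacency

variable {u v : Fin m × Σ i, V i}

theorem class_ne_and_dole_ne_of_part_eq (hc : u.1 = v.1) (hd : u.2.1 ≠ v.2.1)
    (hp : (f u).2.2 = (f v).2.2) : (f u).1 ≠ (f v).1 ∧ (f u).2.1 ≠ (f v).2.1 := by
  rcases f.map_adj_iff.2 ⟨hc, hd⟩ with ⟨-, ha, hj⟩ | ⟨-, hp'⟩
  · exact ⟨ha, hj⟩
  · exact absurd hp hp'

theorem class_eq_of_part_ne (hc : u.1 = v.1) (hd : u.2.1 ≠ v.2.1)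
    (hp : (f u).2.2 ≠ (f v).2.2) : (f u).1 = (f v).1 := by
  rcases f.map_adj_iff.2 ⟨hc, hd⟩ with ⟨hp', -⟩ | ⟨ha, -⟩
  · exact absurd hp' hp
  · exact ha

theorem part_eq_of_class_eq (h : u.1 = v.1 → u.2.1 = v.2.1) (ha : (f u).1 = (f v).1) :
    (f u).2.2 = (f v).2.2 := by
  by_contra hp
  have hadj := f.map_adj_iff.1 (show (almostMultipartite L k m).Adj (f u) (f v) from
    Or.inr ⟨ha, hp⟩)
  exact hadj.2 (h hadj.1)

theorem class_eq_or_dole_eq_of_part_eq (h : u.1 = v.1 → u.2.1 = v.2.1)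
    (hp : (f u).2.2 = (f v).2.2) : (f u).1 = (f v).1 ∨ (f u).2.1 = (f v).2.1 := by
  by_contra! hne
  have hadj := f.map_adj_iff.1 (show (almostMultipartite L k m).Adj (f u) (f v) from
    Or.inl ⟨hp, hne.1, hne.2⟩)
  exact hadj.2 (h hadj.1)

end Adjacency

def PartIsPrivate (x : Fin m × Σ i, V i) : Prop :=
  ∀ w : Fin m × Σ i, V i, w.1 ≠ x.1 → (f w).2.2 ≠ (f x).2.2

variable {f}

/-- A neighbour `y` of a vertex `w` of another copy lying in the part of `x` would either share
the part of `w`, and then `f y = f w` by `hx`, or share the class of `w`, hence of `x`, in a part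
other than that of `x`, which vertices of different copies cannot do. -/
theorem partIsPrivate_of_forall_class_eq (hk : 2 ≤ k) [∀ i, Nonempty (V i)]
    {x : Fin m × Σ i, V i} (β : Fin k)
    (hx : ∀ z : Fin m × Σ i, V i, z.1 ≠ x.1 → (f z).2.2 = (f x).2.2 →
      (f z).1 = (f x).1 ∧ (f z).2.1 = β) :
    PartIsPrivate f x := by
  intro w hw hwp
  have : Nontrivial (Fin k) := Fin.nontrivial_iff_two_le.2 hk
  obtain ⟨i, hi⟩ := exists_ne w.2.1
  let y : Fin m × Σ i, V i := (w.1, ⟨i, Classical.arbitrary _⟩)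
  by_cases hyp : (f y).2.2 = (f x).2.2
  · have hyw : f y = f w := Prod.ext ((hx y hw hyp).1.trans (hx w hw hwp).1.symm)
      (Prod.ext ((hx y hw hyp).2.trans (hx w hw hwp).2.symm) (hyp.trans hwp.symm))
    exact hi (congrArg (·.2.1) (f.injective hyw))
  · have hya : (f y).1 = (f x).1 :=
      (class_eq_of_part_ne f (u := y) (v := w) rfl hi fun h => hyp (h.trans hwp)).trans
        (hx w hw hwp).1
    exact hyp (part_eq_of_class_eq f (absurd · hw) hya)

theorem class_eq_of_part_eq_of_dole_ne {z u₁ u₂ : Fin m × Σ i, V i} (hz₁ : z.1 ≠ u₁.1)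
    (hz₂ : z.1 ≠ u₂.1) (hp₁ : (f z).2.2 = (f u₁).2.2) (hp₂ : (f z).2.2 = (f u₂).2.2)
    (ha : (f u₁).1 = (f u₂).1) (hj : (f u₁).2.1 ≠ (f u₂).2.1) : (f z).1 = (f u₁).1 := by
  rcases class_eq_or_dole_eq_of_part_eq f (absurd · hz₁) hp₁ with h₁ | h₁
  · exact h₁
  rcases class_eq_or_dole_eq_of_part_eq f (absurd · hz₂) hp₂ with h₂ | h₂
  · exact h₂.trans ha.symm
  · exact absurd (h₁.symm.trans h₂) hj

theorem dole_eq_of_part_eq_of_class_ne {z u₁ u₂ : Fin m × Σ i, V i} (hz₁ : z.1 ≠ u₁.1)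
    (hz₂ : z.1 ≠ u₂.1) (hp₁ : (f z).2.2 = (f u₁).2.2) (hp₂ : (f z).2.2 = (f u₂).2.2)
    (hj : (f u₁).2.1 = (f u₂).2.1) (ha : (f u₁).1 ≠ (f u₂).1) : (f z).2.1 = (f u₁).2.1 := by
  rcases class_eq_or_dole_eq_of_part_eq f (absurd · hz₁) hp₁ with h₁ | h₁
  · rcases class_eq_or_dole_eq_of_part_eq f (absurd · hz₂) hp₂ with h₂ | h₂
    · exact absurd (h₁.symm.trans h₂) ha
    · exact h₂.trans hj.symm
  · exact h₁

/-- `u₁` and `u₂` differ in exactly one of class and dole, so a vertex of another copy in their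
part shares the other coordinate with them; as it must share a coordinate with `s` too, the
remaining one is fixed as well. -/
theorem exists_partIsPrivate_of_part_eq (hk : 2 ≤ k) [∀ i, Nonempty (V i)]
    {u₁ u₂ s : Fin m × Σ i, V i} (h₁₂ : u₁ ≠ u₂) (hc₂ : u₂.1 = u₁.1) (hd₂ : u₂.2.1 = u₁.2.1)
    (hcs : s.1 = u₁.1) (hds : s.2.1 ≠ u₁.2.1)
    (hp₂ : (f u₂).2.2 = (f u₁).2.2) (hps : (f s).2.2 = (f u₁).2.2) :
    ∃ x : Fin m × Σ i, V i, x.1 = u₁.1 ∧ PartIsPrivate f x := by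
  have hs₁ := class_ne_and_dole_ne_of_part_eq f hcs hds hps
  rcases class_eq_or_dole_eq_of_part_eq f (fun _ => hd₂) hp₂ with ha | hj
  · have hj : (f u₁).2.1 ≠ (f u₂).2.1 := fun hj =>
      h₁₂ (f.injective (Prod.ext ha.symm (Prod.ext hj hp₂.symm)))
    refine ⟨u₁, rfl, partIsPrivate_of_forall_class_eq hk (f s).2.1 fun z hz hzp => ?_⟩
    have hza := class_eq_of_part_eq_of_dole_ne hz (hc₂ ▸ hz) hzp (hzp.trans hp₂.symm) ha.symm hj
    refine ⟨hza, ?_⟩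
    exact (class_eq_or_dole_eq_of_part_eq f (absurd · (hcs ▸ hz))
      (hzp.trans hps.symm)).resolve_left fun h => hs₁.1 (h.symm.trans hza)
  · have ha : (f u₁).1 ≠ (f u₂).1 := fun ha =>
      h₁₂ (f.injective (Prod.ext ha (Prod.ext hj.symm hp₂.symm)))
    refine ⟨s, hcs, partIsPrivate_of_forall_class_eq hk (f u₁).2.1 fun z hz hzp => ?_⟩
    rw [hcs] at hz
    have hzp₁ : (f z).2.2 = (f u₁).2.2 := hzp.trans hps
    have hzj :=
      dole_eq_of_part_eq_of_class_ne hz (hc₂ ▸ hz) hzp₁ (hzp₁.trans hp₂.symm) hj.symm ha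
    exact ⟨(class_eq_or_dole_eq_of_part_eq f (absurd · (hcs ▸ hz)) hzp).resolve_right
      fun h => hs₁.2 (h.symm.trans hzj), hzj⟩

theorem partIsPrivate_of_dole_ne (hk : 2 ≤ k) [∀ i, Nonempty (V i)] {x y q : Fin m × Σ i, V i}
    (hy : y.1 = x.1) (hq : q.1 = x.1) (hxy : x.2.1 ≠ y.2.1) (hqy : q.2.1 ≠ y.2.1)
    (hpy : (f y).2.2 = (f x).2.2) (hpq : (f q).2.2 ≠ (f x).2.2) : PartIsPrivate f x := by
  have hyq := class_eq_of_part_ne f (hy.trans hq.symm) hqy.symm (hpy ▸ hpq.symm)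
  have hxy' := class_ne_and_dole_ne_of_part_eq f hy.symm hxy hpy.symm
  refine partIsPrivate_of_forall_class_eq hk (f y).2.1 fun z hz hzp => ?_
  have hzy : (f z).1 ≠ (f y).1 := fun h =>
    hpq ((part_eq_of_class_eq f (absurd · (hq ▸ hz)) (h.trans hyq)).symm.trans hzp)
  have hzj := (class_eq_or_dole_eq_of_part_eq f (absurd · (hy ▸ hz))
    (hzp.trans hpy.symm)).resolve_left hzy
  exact ⟨(class_eq_or_dole_eq_of_part_eq f (absurd · hz) hzp).resolve_right
    fun h => hxy'.2 (h.symm.trans hzj), hzj⟩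

theorem partIsPrivate_of_part_ne {u₁ u₂ s : Fin m × Σ i, V i} (h₁₂ : u₁ ≠ u₂)
    (hc₂ : u₂.1 = u₁.1) (hd₂ : u₂.2.1 = u₁.2.1) (hcs : s.1 = u₁.1) (hds : s.2.1 ≠ u₁.2.1)
    (hp₁ : (f s).2.2 ≠ (f u₁).2.2) (hp₂ : (f s).2.2 ≠ (f u₂).2.2) : PartIsPrivate f u₁ := by
  have ha₁ := class_eq_of_part_ne f hcs hds hp₁
  have ha₂ := class_eq_of_part_ne f (hcs.trans hc₂.symm) (hd₂ ▸ hds) hp₂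
  have hp := part_eq_of_class_eq f (fun _ => hd₂) (ha₂.symm.trans ha₁)
  have hj : (f u₁).2.1 ≠ (f u₂).2.1 := fun hj =>
    h₁₂ (f.injective (Prod.ext (ha₁.symm.trans ha₂) (Prod.ext hj hp.symm)))
  intro z hz hzp
  have hza := class_eq_of_part_eq_of_dole_ne hz (hc₂ ▸ hz) hzp (hzp.trans hp.symm)
    (ha₁.symm.trans ha₂) hj
  exact hp₁ ((part_eq_of_class_eq f (absurd · (hcs ▸ hz)) (hza.trans ha₁.symm)).symm.trans
    hzp)

theorem exists_partIsPrivate (hk : 2 ≤ k) [∀ i, Nonempty (V i)] (hV : ∃ i, Nontrivial (V i))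
    (c : Fin m) : ∃ x : Fin m × Σ i, V i, x.1 = c ∧ PartIsPrivate f x := by
  have : Nontrivial (Fin k) := Fin.nontrivial_iff_two_le.2 hk
  obtain ⟨i, hi⟩ := hV
  obtain ⟨a, b, hab⟩ := exists_pair_ne (V i)
  obtain ⟨i', hi'⟩ := exists_ne i
  let u₁ : Fin m × Σ i, V i := (c, ⟨i, a⟩)
  let u₂ : Fin m × Σ i, V i := (c, ⟨i, b⟩)
  let s : Fin m × Σ i, V i := (c, ⟨i', Classical.arbitrary _⟩)
  have h₁₂ : u₁ ≠ u₂ := by simp [u₁, u₂, hab]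
  by_cases hp₁ : (f s).2.2 = (f u₁).2.2 <;> by_cases hp₂ : (f s).2.2 = (f u₂).2.2
  · exact exists_partIsPrivate_of_part_eq hk (s := s) h₁₂ rfl rfl rfl hi'
      (hp₂.symm.trans hp₁) hp₁
  · exact ⟨u₁, rfl, partIsPrivate_of_dole_ne hk (y := s) (q := u₂) rfl rfl hi'.symm hi'.symm
      hp₁ fun h => hp₂ (hp₁.trans h.symm)⟩
  · exact ⟨u₂, rfl, partIsPrivate_of_dole_ne hk (y := s) (q := u₁) rfl rfl hi'.symm hi'.symm
      hp₂ fun h => hp₁ (hp₂.trans h.symm)⟩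
  · exact ⟨u₁, rfl, partIsPrivate_of_part_ne (s := s) h₁₂ rfl rfl rfl hi' hp₁ hp₂⟩

/-- The private parts of the `m` copies exhaust the `m` parts. -/
theorem part_eq_iff (hk : 2 ≤ k) [∀ i, Nonempty (V i)] (hV : ∃ i, Nontrivial (V i))
    {u v : Fin m × Σ i, V i} : (f u).2.2 = (f v).2.2 ↔ u.1 = v.1 := by
  choose x hx hpriv using exists_partIsPrivate (f := f) hk hV
  have hinj : Function.Injective fun c => (f (x c)).2.2 := by
    intro c c' h
    by_contra hne
    exact hpriv c (x c') (by rw [hx, hx]; exact Ne.symm hne) h.symm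
  have hpart (w : Fin m × Σ i, V i) : (f w).2.2 = (f (x w.1)).2.2 := by
    obtain ⟨c, hc⟩ := Finite.injective_iff_surjective.1 hinj (f w).2.2
    obtain rfl : w.1 = c := by
      by_contra hne
      exact hpriv c w (by rwa [hx]) hc.symm
    exact hc.symm
  rw [hpart u, hpart v]
  exact hinj.eq_iff

/-- Within a single part, the doles of a copy go injectively, hence bijectively, to the `k`
target doles. -/
theorem dole_eq_of_forall_part_eq [∀ i, Nonempty (V i)] {u v : Fin m × Σ i, V i}
    (hflat : ∀ w : Fin m × Σ i, V i, w.1 = u.1 → (f w).2.2 = (f u).2.2)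
    (hc : v.1 = u.1) (hd : v.2.1 = u.2.1) : (f v).2.1 = (f u).2.1 := by
  let r (i : Fin k) : Fin m × Σ i, V i := (u.1, ⟨i, Classical.arbitrary _⟩)
  have hr (i : Fin k) : (f (r i)).2.2 = (f u).2.2 := hflat (r i) rfl
  have hinj : Function.Injective fun i => (f (r i)).2.1 := by
    intro i i' h
    by_contra hne
    exact (class_ne_and_dole_ne_of_part_eq f (u := r i) (v := r i') rfl hne
      ((hr i).trans (hr i').symm)).2 h
  have hdole (w : Fin m × Σ i, V i) (hw : w.1 = u.1) : (f w).2.1 = (f (r w.2.1)).2.1 := by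
    obtain ⟨i, hi⟩ := Finite.injective_iff_surjective.1 hinj (f w).2.1
    obtain rfl : i = w.2.1 := by
      by_contra hne
      exact (class_ne_and_dole_ne_of_part_eq f (v := r i) hw (Ne.symm hne)
        ((hflat w hw).trans (hr i).symm)).2 hi.symm
    exact hi.symm
  rw [hdole v hc, hdole u rfl, hd]

theorem class_injective (hk : 2 ≤ k) [∀ i, Nonempty (V i)] (hV : ∃ i, Nontrivial (V i)) :
    Function.Injective fun u => (f u).1 := by
  intro u v ha
  by_cases hc : u.1 = v.1
  · have hp : (f u).2.2 = (f v).2.2 := (part_eq_iff hk hV).2 hc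
    by_cases hd : u.2.1 = v.2.1
    · have hflat (w : Fin m × Σ i, V i) (hw : w.1 = v.1) : (f w).2.2 = (f v).2.2 :=
        (part_eq_iff hk hV).2 hw
      exact f.injective (Prod.ext ha (Prod.ext (dole_eq_of_forall_part_eq hflat hc hd) hp))
    · exact absurd ha (class_ne_and_dole_ne_of_part_eq f hc hd hp).1
  · exact absurd ((part_eq_iff hk hV).1 (part_eq_of_class_eq f (absurd · hc) ha)) hc

end almostMultipartite

/-- with `k ≥ 2` and `n_k > 1`, the almost multipartite graph
`G^m_{ℓ−1,k}` (`ℓ = m(n₁+…+n_k)`) contains no induced subgraph isomorphic to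
`mK_{n₁,…,n_k}`. -/
theorem almostMultipartite_not_contains (k m : ℕ) (hk : 2 ≤ k) (hm : 1 ≤ m)
    (n : Fin k → ℕ) (hpos : ∀ i, 0 < n i)
    (hnk : 1 < n ⟨k - 1, by omega⟩) :
    ¬Nonempty ((manyCopies m (SimpleGraph.completeMultipartiteGraph fun i => Fin (n i))) ↪g
        almostMultipartite (m * ∑ i, n i - 1) k m) := by
  rintro ⟨f⟩
  have (i : Fin k) : Nonempty (Fin (n i)) := ⟨⟨0, hpos i⟩⟩
  have hcard := Fintype.card_le_of_injective _
    (almostMultipartite.class_injective (f := f) hk ⟨_, Fin.nontrivial_iff_two_le.2 hnk⟩)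
  have hsum : 0 < ∑ i, n i :=
    Finset.sum_pos (fun i _ => hpos i) ⟨⟨0, by omega⟩, Finset.mem_univ _⟩
  simp only [Fintype.card_prod, Fintype.card_fin, Fintype.card_sigma] at hcard
  have : 0 < m * ∑ i, n i := Nat.mul_pos hm hsum
  omega
end

section
/- Let K_{2,1,1} be the diamond graph (the complete multipartite graph with parts of sizes 2, 1, 1), and let F = K_1 ⊔ K_{2,1,1}. Then the graph 2·G^1_{4,3} (two disjoint copies of the almost multipartite graph G^1_{4,3}) contains an induced subgraph isomorphic to F, while the graph 2·G^1_{3,3} does not contain an induced subgraph isomorphic to F. -/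
/-! In `G¹_{ℓ,k}` two vertices are adjacent iff they differ both in class and in dole. Giving
the four vertices of the diamond `K_{2,1,1}` distinct classes and each of its parts its own dole
embeds it in `G¹_{4,3}`; the isolated vertex goes into the second copy. Conversely, the diamond
is connected, so it would sit inside a single copy of `G¹_{3,3}`. There its two non-adjacent
vertices share a class (resp. a dole), and having only three doles (resp. classes) forces both
common neighbours onto the remaining one, so they are not adjacent. -/

open SimpleGraph

section ManyCopies

variable {α β : Type*}

lemma manyCopies_adj {A : SimpleGraph α} {m : ℕ} {p q : Fin m × α} :
    (manyCopies m A).Adj p q ↔ p.1 = q.1 ∧ A.Adj p.2 q.2 := Iff.rfl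

def manyCopies.sumEmbedding (A : SimpleGraph α) : A ⊕g A ↪g manyCopies 2 A where
  toFun := Sum.elim (0, ·) (1, ·)
  inj' := by rintro (a | a) (b | b) h <;> simp_all
  map_rel_iff' {u v} := by
    change (manyCopies 2 A).Adj (Sum.elim (0, ·) (1, ·) u) (Sum.elim (0, ·) (1, ·) v) ↔ _
    cases u <;> cases v <;> simp [manyCopies_adj]

variable {A : SimpleGraph α} {H : SimpleGraph β} {m : ℕ}

lemma manyCopies.copy_eq_of_reachable (f : H ↪g manyCopies m A) {u v : β}
    (huv : H.Reachable u v) : (f u).1 = (f v).1 := by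
  rw [reachable_iff_reflTransGen] at huv
  induction huv with
  | refl => rfl
  | tail _ hadj ih => exact ih.trans (f.map_adj_iff.2 hadj).1

def manyCopies.embeddingOfPreconnected (hH : H.Preconnected) (f : H ↪g manyCopies m A) :
    H ↪g A where
  toFun v := (f v).2
  inj' u v h := f.injective (Prod.ext (copy_eq_of_reachable f (hH u v)) h)
  map_rel_iff' {u v} := by
    rw [← f.map_adj_iff, manyCopies_adj]
    exact ⟨fun h => ⟨copy_eq_of_reachable f (hH u v), h⟩, And.right⟩

end ManyCopies

def SimpleGraph.Embedding.botOfSubsingleton {V W : Type*} [Subsingleton V] {G : SimpleGraph W}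
    (w : W) : (⊥ : SimpleGraph V) ↪g G where
  toFun _ := w
  inj' _ _ _ := Subsingleton.elim _ _
  map_rel_iff' := by simp

lemma completeMultipartiteGraph_preconnected {ι : Type*} {V : ι → Type*} {i j : ι}
    (hij : i ≠ j) (vi : V i) (vj : V j) : (completeMultipartiteGraph V).Preconnected := by
  intro u w
  by_cases huw : u.1 = w.1
  · obtain ⟨x, hxu⟩ : ∃ x : Σ i, V i, x.1 ≠ u.1 := by
      by_cases hu : u.1 = i
      · exact ⟨⟨j, vj⟩, hu ▸ hij.symm⟩
      · exact ⟨⟨i, vi⟩, Ne.symm hu⟩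
    have hux : (completeMultipartiteGraph V).Adj u x := by simpa using hxu.symm
    have hxw : (completeMultipartiteGraph V).Adj x w := by simpa [← huw] using hxu
    exact hux.reachable.trans hxw.reachable
  · exact Adj.reachable (by simpa using huw)

lemma almostMultipartite_adj_same_part {ℓ k m : ℕ} {i i' : Fin ℓ} {j j' : Fin k} {h : Fin m} :
    (almostMultipartite ℓ k m).Adj (i, j, h) (i', j', h) ↔ i ≠ i' ∧ j ≠ j' := by
  simp [almostMultipartite]

lemma almostMultipartite_one_adj {ℓ k : ℕ} {p q : Fin ℓ × Fin k × Fin 1} :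
    (almostMultipartite ℓ k 1).Adj p q ↔ p.1 ≠ q.1 ∧ p.2.1 ≠ q.2.1 := by
  obtain ⟨i, j, h⟩ := p
  obtain ⟨i', j', h'⟩ := q
  obtain rfl := Subsingleton.elim h h'
  exact almostMultipartite_adj_same_part

def completeMultipartiteGraph.embeddingAlmostMultipartite {ι : Type*} {V : ι → Type*}
    {ℓ k m : ℕ} (g : (Σ i, V i) ↪ Fin ℓ) (d : ι ↪ Fin k) (h : Fin m) :
    completeMultipartiteGraph V ↪g almostMultipartite ℓ k m where
  toFun v := (g v, d v.1, h)
  inj' u v huv := g.injective (congrArg Prod.fst huv)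
  map_rel_iff' {u v} := by
    change (almostMultipartite ℓ k m).Adj (g u, d u.1, h) (g v, d v.1, h) ↔ u.1 ≠ v.1
    simp only [almostMultipartite_adj_same_part, ne_eq, g.apply_eq_iff_eq, d.apply_eq_iff_eq]
    exact ⟨And.right, fun huv => ⟨fun h => huv (congrArg Sigma.fst h), huv⟩⟩

lemma Fin.eq_of_ne_of_ne_three {a b c d : Fin 3} (hab : a ≠ b) (hca : c ≠ a) (hcb : c ≠ b)
    (hda : d ≠ a) (hdb : d ≠ b) : c = d := by
  omega

lemma almostMultipartite_three_three_one_not_adj_of_common_neighbors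
    {x₁ x₂ y z : Fin 3 × Fin 3 × Fin 1} (hx : x₁ ≠ x₂)
    (hx₁₂ : ¬(almostMultipartite 3 3 1).Adj x₁ x₂)
    (hx₁y : (almostMultipartite 3 3 1).Adj x₁ y) (hx₂y : (almostMultipartite 3 3 1).Adj x₂ y)
    (hx₁z : (almostMultipartite 3 3 1).Adj x₁ z) (hx₂z : (almostMultipartite 3 3 1).Adj x₂ z) :
    ¬(almostMultipartite 3 3 1).Adj y z := by
  simp only [almostMultipartite_one_adj] at *
  rintro ⟨hyz, hyz'⟩
  by_cases hi : x₁.1 = x₂.1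
  · have hj : x₁.2.1 ≠ x₂.2.1 := fun hj =>
      hx (Prod.ext hi (Prod.ext hj (Subsingleton.elim _ _)))
    exact hyz' (Fin.eq_of_ne_of_ne_three hj hx₁y.2.symm hx₂y.2.symm hx₁z.2.symm hx₂z.2.symm)
  · have hj : x₁.2.1 = x₂.2.1 := by tauto
    exact hyz (Fin.eq_of_ne_of_ne_three hi hx₁y.1.symm hx₂y.1.symm hx₁z.1.symm hx₂z.1.symm)

abbrev diamond : SimpleGraph (Σ i : Fin 3, Fin (![2, 1, 1] i)) :=
  completeMultipartiteGraph fun i : Fin 3 => Fin (![2, 1, 1] i)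

lemma diamond_preconnected : diamond.Preconnected :=
  completeMultipartiteGraph_preconnected (i := 0) (j := 1) (by decide) ⟨0, by decide⟩
    ⟨0, by decide⟩

lemma diamond_isIndContained_almostMultipartite_four_three_one :
    diamond ⊴ almostMultipartite 4 3 1 :=
  ⟨completeMultipartiteGraph.embeddingAlmostMultipartite
    (Fintype.equivFinOfCardEq rfl).toEmbedding (Function.Embedding.refl _) 0⟩

lemma not_diamond_isIndContained_almostMultipartite_three_three_one :
    ¬diamond ⊴ almostMultipartite 3 3 1 := by
  rintro ⟨e⟩
  have adj {u v : Σ i : Fin 3, Fin (![2, 1, 1] i)} (h : u.1 ≠ v.1) :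
      (almostMultipartite 3 3 1).Adj (e u) (e v) :=
    e.map_adj_iff.2 h
  exact almostMultipartite_three_three_one_not_adj_of_common_neighbors
    (x₁ := e ⟨0, ⟨0, by decide⟩⟩) (x₂ := e ⟨0, ⟨1, by decide⟩⟩)
    (y := e ⟨1, ⟨0, by decide⟩⟩) (z := e ⟨2, ⟨0, by decide⟩⟩)
    (e.injective.ne (by decide)) (fun h => e.map_adj_iff.1 h rfl)
    (adj (by decide)) (adj (by decide)) (adj (by decide)) (adj (by decide)) (adj (by decide))

/-- with `F = K₁ ⊔ K_{2,1,1}` (a vertex plus the diamond graph),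
the graph `2·G¹_{4,3}` contains an induced subgraph isomorphic to `F`, while
`2·G¹_{3,3}` does not. -/
theorem diamond_plus_vertex_induced :
    Nonempty (((⊥ : SimpleGraph (Fin 1)) ⊕g
        SimpleGraph.completeMultipartiteGraph fun i : Fin 3 => Fin (![2, 1, 1] i)) ↪g
        manyCopies 2 (almostMultipartite 4 3 1)) ∧
    ¬Nonempty (((⊥ : SimpleGraph (Fin 1)) ⊕g
        SimpleGraph.completeMultipartiteGraph fun i : Fin 3 => Fin (![2, 1, 1] i)) ↪g
        manyCopies 2 (almostMultipartite 3 3 1)) := by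
  constructor
  · obtain ⟨e⟩ := diamond_isIndContained_almostMultipartite_four_three_one
    exact ⟨(manyCopies.sumEmbedding _).comp (Embedding.sum (Embedding.botOfSubsingleton 0) e)⟩
  · rintro ⟨f⟩
    exact not_diamond_isIndContained_almostMultipartite_three_three_one
      ⟨manyCopies.embeddingOfPreconnected diamond_preconnected (f.comp Embedding.sumInr)⟩
end
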